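/- arXiv:2206.12061 — 7 statements merged into one kernel-verified Lean document; each statement's English description precedes it below -/
import Mathlib

section
/- Let P be a symmetric positive definite matrix and F a monotone set-valued operator. Suppose z_{k+1} satisfies P(z_k - z_{k+1}) ∈ F(z_{k+1}). Then for every ω_k ∈ F(z_k), setting ω̃_{k+1} = P(z_k - z_{k+1}), one has ‖ω̃_{k+1}‖²_{P^{-1}} ≤ ‖ω_k‖²_{P^{-1}} - ‖ω̃_{k+1} - ω_k‖²_{P^{-1}}. -/
open Matrix

/-- Quadratic form `⟨v, G v⟩`. -/
def qf {ι : Type*} [Fintype ι] (G : Matrix ι ι ℝ) (v : ι → ℝ) : ℝ := v ⬝ᵥ G.mulVec v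

theorem stmt3 {d : ℕ} (P : Matrix (Fin d) (Fin d) ℝ) (hP : P.PosDef)
    (F : (Fin d → ℝ) → Set (Fin d → ℝ))
    (hmono : ∀ z z' u v, u ∈ F z → v ∈ F z' → 0 ≤ (u - v) ⬝ᵥ (z - z'))
    (zk zk1 : Fin d → ℝ) (hstep : P.mulVec (zk - zk1) ∈ F zk1) :
    ∀ ωk ∈ F zk,
      qf P⁻¹ (P.mulVec (zk - zk1)) ≤ qf P⁻¹ ωk - qf P⁻¹ (P.mulVec (zk - zk1) - ωk) := by
  intro ωk hωk
  set w := P.mulVec (zk - zk1) with hw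
  have hinv : IsUnit P.det := isUnit_iff_ne_zero.mpr (ne_of_gt hP.det_pos)
  have hPinv : P⁻¹.mulVec w = zk - zk1 := by
    rw [hw, mulVec_mulVec, Matrix.nonsing_inv_mul P hinv, one_mulVec]
  have hsymm : P⁻¹.IsHermitian := hP.isHermitian.inv
  have hmono' : 0 ≤ (ωk - w) ⬝ᵥ (zk - zk1) := hmono zk zk1 ωk w hωk hstep
  rw [← hPinv] at hmono'
  -- key symmetry fact: x ⬝ᵥ P⁻¹ y = y ⬝ᵥ P⁻¹ x
  have hsym : ∀ x y : Fin d → ℝ, x ⬝ᵥ P⁻¹.mulVec y = y ⬝ᵥ P⁻¹.mulVec x := by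
    intro x y
    rw [dotProduct_mulVec, ← mulVec_transpose]
    have : P⁻¹ᵀ = P⁻¹ := by
      have := hsymm; rwa [Matrix.IsHermitian, Matrix.conjTranspose_eq_transpose_of_trivial] at this
    rw [this, dotProduct_comm]
  have expand : qf P⁻¹ ωk - qf P⁻¹ (w - ωk) - qf P⁻¹ w = 2 * ((ωk - w) ⬝ᵥ P⁻¹.mulVec w) := by
    simp only [qf, Matrix.mulVec_sub, sub_dotProduct, dotProduct_sub]
    have h1 := hsym ωk w
    ring_nf
    nlinarith [hsym ωk w]
  linarith
end

section
/- Under the update P(z_k - z_{k+1}) ∈ F(z_{k+1}) with P symmetric positive definite and F monotone, the infimal subdifferential size dist²_{P^{-1}}(0, F(z_k)) = inf_{w ∈ F(z_k)} ‖w‖²_{P^{-1}} is non-increasing in k: dist²_{P^{-1}}(0, F(z_{k+1})) ≤ dist²_{P^{-1}}(0, F(z_k)). -/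
open Matrix

/-- Squared distance (in the quadratic form of `G`) from `0` to a set `S`:
`dist²_G(0,S) = inf_{w ∈ S} ⟨w, G w⟩`. -/
noncomputable def distSqTo {ι : Type*} [Fintype ι] (G : Matrix ι ι ℝ)
    (S : Set (ι → ℝ)) : ℝ := sInf (qf G '' S)

/-!
With `w' = P (z_k - z_{k+1}) ∈ F(z_{k+1})` and any `w ∈ F(z_k)`, expanding `‖w‖²_{P⁻¹}` around `w'`
gives (using `P⁻¹ w' = z_k - z_{k+1}`)
`‖w‖²_{P⁻¹} = ‖w'‖²_{P⁻¹} + 2⟨w - w', z_k - z_{k+1}⟩ + ‖w - w'‖²_{P⁻¹}`, and the middle term is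
nonnegative by monotonicity of `F`. Hence `w'` already beats every element of `F(z_k)`.
-/

section QuadraticForm

variable {ι : Type*} [Fintype ι] {G : Matrix ι ι ℝ}

lemma dotProduct_mulVec_comm_of_transpose_eq (hG : Gᵀ = G) (u v : ι → ℝ) :
    u ⬝ᵥ G *ᵥ v = v ⬝ᵥ G *ᵥ u := by
  rw [dotProduct_mulVec, ← mulVec_transpose, hG, dotProduct_comm]

lemma qf_add_of_transpose_eq (hG : Gᵀ = G) (u v : ι → ℝ) :
    qf G (u + v) = qf G u + 2 * (v ⬝ᵥ G *ᵥ u) + qf G v := by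
  have hcomm := dotProduct_mulVec_comm_of_transpose_eq hG u v
  simp only [qf, mulVec_add, dotProduct_add, add_dotProduct]
  linarith

lemma qf_le_qf_of_dotProduct_nonneg (hG : G.PosSemidef) {u w : ι → ℝ}
    (h : 0 ≤ (w - u) ⬝ᵥ G *ᵥ u) : qf G u ≤ qf G w := by
  have hsymm : Gᵀ = G := hG.1
  have hexpand := qf_add_of_transpose_eq hsymm u (w - u)
  rw [add_sub_cancel] at hexpand
  have hrest : 0 ≤ qf G (w - u) := hG.dotProduct_mulVec_nonneg (w - u)
  linarith

lemma distSqTo_le_qf (hG : G.PosSemidef) {S : Set (ι → ℝ)} {u : ι → ℝ} (hu : u ∈ S) :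
    distSqTo G S ≤ qf G u :=
  csInf_le ⟨0, by rintro _ ⟨v, -, rfl⟩; exact hG.dotProduct_mulVec_nonneg v⟩ ⟨u, hu, rfl⟩

lemma le_distSqTo {S : Set (ι → ℝ)} (hS : S.Nonempty) {c : ℝ} (h : ∀ w ∈ S, c ≤ qf G w) :
    c ≤ distSqTo G S :=
  le_csInf (hS.image _) (by rintro _ ⟨w, hw, rfl⟩; exact h w hw)

end QuadraticForm

lemma qf_inv_mulVec_le {ι : Type*} [Fintype ι] [DecidableEq ι] {P : Matrix ι ι ℝ}
    (hP : P.PosDef) {v w : ι → ℝ} (h : 0 ≤ (w - P *ᵥ v) ⬝ᵥ v) :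
    qf P⁻¹ (P *ᵥ v) ≤ qf P⁻¹ w := by
  refine qf_le_qf_of_dotProduct_nonneg hP.inv.posSemidef ?_
  rwa [mulVec_mulVec, nonsing_inv_mul P hP.det_pos.ne'.isUnit, one_mulVec]

lemma distSqTo_inv_le_of_step {ι : Type*} [Fintype ι] [DecidableEq ι] {P : Matrix ι ι ℝ}
    (hP : P.PosDef) {F : (ι → ℝ) → Set (ι → ℝ)}
    (hmono : ∀ z z' u v, u ∈ F z → v ∈ F z' → 0 ≤ (u - v) ⬝ᵥ (z - z'))
    {x y : ι → ℝ} (hstep : P *ᵥ (x - y) ∈ F y) (hne : (F x).Nonempty) :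
    distSqTo P⁻¹ (F y) ≤ distSqTo P⁻¹ (F x) :=
  (distSqTo_le_qf hP.inv.posSemidef hstep).trans <|
    le_distSqTo hne fun _ hw => qf_inv_mulVec_le hP (hmono _ _ _ _ hw hstep)

theorem stmt4_general {d : ℕ} (P : Matrix (Fin d) (Fin d) ℝ) (hP : P.PosDef)
    (F : (Fin d → ℝ) → Set (Fin d → ℝ))
    (hmono : ∀ z z' u v, u ∈ F z → v ∈ F z' → 0 ≤ (u - v) ⬝ᵥ (z - z'))
    (z : ℕ → Fin d → ℝ)
    (hstep : ∀ k, P.mulVec (z k - z (k+1)) ∈ F (z (k+1)))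
    (hne : (F (z 0)).Nonempty) :
    ∀ k, distSqTo P⁻¹ (F (z (k+1))) ≤ distSqTo P⁻¹ (F (z k)) := by
  intro k
  have hFk : (F (z k)).Nonempty := by
    cases k with
    | zero => exact hne
    | succ n => exact ⟨_, hstep n⟩
  exact distSqTo_inv_le_of_step hP hmono (hstep k) hFk

theorem stmt4 {d : ℕ} (P : Matrix (Fin d) (Fin d) ℝ) (hP : P.PosDef)
    (F : (Fin d → ℝ) → Set (Fin d → ℝ))
    (hmono : ∀ z z' u v, u ∈ F z → v ∈ F z' → 0 ≤ (u - v) ⬝ᵥ (z - z'))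
    (hclosed : ∀ z, IsClosed (F z)) (hconvex : ∀ z, Convex ℝ (F z))
    (z : ℕ → Fin d → ℝ)
    (hstep : ∀ k, P.mulVec (z k - z (k+1)) ∈ F (z (k+1)))
    (hne : (F (z 0)).Nonempty) :
    ∀ k, distSqTo P⁻¹ (F (z (k+1))) ≤ distSqTo P⁻¹ (F (z k)) :=
  stmt4_general P hP F hmono z hstep hne
end

section
/- Under the update P(z_k - z_{k+1}) ∈ F(z_{k+1}) with P symmetric positive definite, F monotone, and 0 ∈ F(z_*), the IDS satisfies dist²_{P^{-1}}(0, F(z_k)) ≤ (1/k)‖z_0 - z_*‖²_P for all k ≥ 1. -/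
open Matrix

/-!
Let `g i = ‖z i - z (i+1)‖²_P`. Both facts below come from the identity
`‖a‖²_P = ‖a - b‖²_P + 2⟨P(a - b), b⟩ + ‖b‖²_P` together with monotonicity of `F`: tested against
`0 ∈ F z⋆` it gives `g i ≤ ‖z i - z⋆‖²_P - ‖z (i+1) - z⋆‖²_P`, and tested at two consecutive
steps it shows that `g` is nonincreasing. Summing the first bound, `k * g (k-1) ≤ ‖z 0 - z⋆‖²_P`,
and `g (k-1)` is the `P⁻¹`-norm squared of `P (z (k-1) - z k) ∈ F (z k)`.
-/

section QuadraticForm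

variable {ι : Type*} [Fintype ι] {P : Matrix ι ι ℝ}

theorem qf_nonneg (hP : P.PosSemidef) (v : ι → ℝ) : 0 ≤ qf P v :=
  hP.dotProduct_mulVec_nonneg v

theorem qf_inv_mulVec [DecidableEq ι] (hP : IsUnit P) (v : ι → ℝ) :
    qf P⁻¹ (P *ᵥ v) = qf P v := by
  rw [qf, mulVec_mulVec, nonsing_inv_mul P ((isUnit_iff_isUnit_det P).mp hP), one_mulVec,
    dotProduct_comm, qf]

theorem distSqTo_le_qf_s6 (hP : P.PosSemidef) {S : Set (ι → ℝ)} {v : ι → ℝ} (hv : v ∈ S) :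
    distSqTo P S ≤ qf P v :=
  csInf_le ⟨0, by rintro _ ⟨w, -, rfl⟩; exact qf_nonneg hP w⟩ ⟨v, hv, rfl⟩

theorem qf_sub_le_of_dotProduct_nonneg (hP : P.IsHermitian) {a b : ι → ℝ}
    (h : 0 ≤ P *ᵥ (a - b) ⬝ᵥ b) : qf P (a - b) ≤ qf P a - qf P b := by
  have hsym : (a - b) ⬝ᵥ P *ᵥ b = P *ᵥ (a - b) ⬝ᵥ b := by
    rw [dotProduct_mulVec, ← mulVec_transpose, show Pᵀ = P by simpa using hP.eq, dotProduct_comm]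
  have hexpand : qf P a = qf P (a - b) + 2 * (P *ᵥ (a - b) ⬝ᵥ b) + qf P b := by
    conv_lhs => rw [← sub_add_cancel a b]
    simp only [qf, mulVec_add, add_dotProduct, dotProduct_add]
    rw [dotProduct_comm b (P *ᵥ (a - b)), hsym]
    ring
  linarith

end QuadraticForm

theorem mul_le_of_antitone_of_le_sub {g D : ℕ → ℝ} (hg : Antitone g)
    (hgD : ∀ i, g i ≤ D i - D (i + 1)) (hD : ∀ i, 0 ≤ D i) (n : ℕ) :
    (n + 1 : ℝ) * g n ≤ D 0 := by
  suffices h : ∀ n : ℕ, (n + 1 : ℝ) * g n ≤ D 0 - D (n + 1) by linarith [h n, hD (n + 1)]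
  intro n
  induction n with
  | zero => simpa using hgD 0
  | succ n ih =>
    have hmul : (n + 1 : ℝ) * g (n + 1) ≤ (n + 1 : ℝ) * g n :=
      mul_le_mul_of_nonneg_left (hg n.le_succ) (by positivity)
    push_cast
    linarith [hgD (n + 1)]

section ProximalPoint

variable {ι : Type*} [Fintype ι] {P : Matrix ι ι ℝ} {F : (ι → ℝ) → Set (ι → ℝ)}
  {z : ℕ → ι → ℝ}

theorem qf_step_le_sub (hP : P.IsHermitian)
    (hmono : ∀ z z' u v, u ∈ F z → v ∈ F z' → 0 ≤ (u - v) ⬝ᵥ (z - z'))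
    {zstar : ι → ℝ} (hzstar : (0 : ι → ℝ) ∈ F zstar)
    (hstep : ∀ i, P *ᵥ (z i - z (i + 1)) ∈ F (z (i + 1))) (i : ℕ) :
    qf P (z i - z (i + 1)) ≤ qf P (z i - zstar) - qf P (z (i + 1) - zstar) := by
  have h := hmono _ _ _ _ (hstep i) hzstar
  rw [sub_zero, ← sub_sub_sub_cancel_right (z i) (z (i + 1)) zstar] at h
  simpa only [sub_sub_sub_cancel_right] using qf_sub_le_of_dotProduct_nonneg hP h

theorem antitone_qf_step (hP : P.PosDef)
    (hmono : ∀ z z' u v, u ∈ F z → v ∈ F z' → 0 ≤ (u - v) ⬝ᵥ (z - z'))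
    (hstep : ∀ i, P *ᵥ (z i - z (i + 1)) ∈ F (z (i + 1))) :
    Antitone fun i => qf P (z i - z (i + 1)) := by
  refine antitone_nat_of_succ_le fun i => ?_
  have h := hmono _ _ _ _ (hstep (i + 1)) (hstep i)
  have h' : 0 ≤ P *ᵥ ((z i - z (i + 1)) - (z (i + 1) - z (i + 1 + 1))) ⬝ᵥ
      (z (i + 1) - z (i + 1 + 1)) := by
    convert h using 1
    simp only [mulVec_sub, sub_dotProduct, dotProduct_sub]
    ring
  linarith [qf_sub_le_of_dotProduct_nonneg hP.isHermitian h', qf_nonneg hP.posSemidef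
    ((z i - z (i + 1)) - (z (i + 1) - z (i + 1 + 1)))]

end ProximalPoint

theorem stmt6_general {d : ℕ} (P : Matrix (Fin d) (Fin d) ℝ) (hP : P.PosDef)
    (F : (Fin d → ℝ) → Set (Fin d → ℝ))
    (hmono : ∀ z z' u v, u ∈ F z → v ∈ F z' → 0 ≤ (u - v) ⬝ᵥ (z - z'))
    (zstar : Fin d → ℝ) (hzstar : (0 : Fin d → ℝ) ∈ F zstar)
    (z : ℕ → Fin d → ℝ)
    (hstep : ∀ i, P.mulVec (z i - z (i+1)) ∈ F (z (i+1))) :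
    ∀ k : ℕ, 1 ≤ k → distSqTo P⁻¹ (F (z k)) ≤ (1 / (k : ℝ)) * qf P (z 0 - zstar) := by
  intro k hk
  obtain ⟨m, rfl⟩ : ∃ m, k = m + 1 := ⟨k - 1, by omega⟩
  have hdecay := mul_le_of_antitone_of_le_sub (antitone_qf_step hP hmono hstep)
    (qf_step_le_sub hP.isHermitian hmono hzstar hstep)
    (fun i => qf_nonneg hP.posSemidef (z i - zstar)) m
  calc distSqTo P⁻¹ (F (z (m + 1))) ≤ qf P⁻¹ (P *ᵥ (z m - z (m + 1))) :=
        distSqTo_le_qf_s6 hP.inv.posSemidef (hstep m)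
    _ = qf P (z m - z (m + 1)) := qf_inv_mulVec hP.isUnit (z m - z (m + 1))
    _ ≤ (1 / ((m + 1 : ℕ) : ℝ)) * qf P (z 0 - zstar) := by
        rw [one_div_mul_eq_div, le_div_iff₀ (by positivity)]
        push_cast
        linarith

theorem stmt6 {d : ℕ} (P : Matrix (Fin d) (Fin d) ℝ) (hP : P.PosDef)
    (F : (Fin d → ℝ) → Set (Fin d → ℝ))
    (hmono : ∀ z z' u v, u ∈ F z → v ∈ F z' → 0 ≤ (u - v) ⬝ᵥ (z - z'))
    (hclosed : ∀ z, IsClosed (F z)) (hconvex : ∀ z, Convex ℝ (F z))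
    (zstar : Fin d → ℝ) (hzstar : (0 : Fin d → ℝ) ∈ F zstar)
    (z : ℕ → Fin d → ℝ)
    (hstep : ∀ i, P.mulVec (z i - z (i+1)) ∈ F (z (i+1))) :
    ∀ k : ℕ, 1 ≤ k → distSqTo P⁻¹ (F (z k)) ≤ (1 / (k : ℝ)) * qf P (z 0 - zstar) :=
  stmt6_general P hP F hmono zstar hzstar z hstep
end

section
/- For PDHG with step size s < 1/‖A‖ applied to a convex-concave minimax problem with saddle point z_*, the last iterate satisfies, for all z = (x,y) and k ≥ 1: L(x_k, y) - L(x, y_k) ≤ (1/√k)(‖z_0 - z_*‖²_{P_s} + ‖z_0 - z_*‖_{P_s} ‖z_* - z‖_{P_s}). -/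
/-!
PDHG is the proximal point method preconditioned by `P_s`. The optimality conditions of the two
prox steps, together with convexity of `f` and `g`, give for every `w` the one-step inequality
`G(z_{k+1}, w) ≤ ⟨z_k - z_{k+1}, z_{k+1} - w⟩_{P_s}`, where `G` is the primal-dual gap. Testing it
at `w = z_*` gives Fejér monotonicity, with the squared steps `‖z_j - z_{j+1}‖²_{P_s}` telescoping
below `‖z_0 - z_*‖²_{P_s}`; testing two consecutive steps against each other's iterates shows the
steps are nonincreasing, so the last one is at most `‖z_0 - z_*‖²_{P_s} / k`. Cauchy-Schwarz in
the `P_s`-seminorm, which is positive semidefinite because `s ‖A‖ ≤ 1`, turns the one-step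
inequality into the bound.
-/

open Matrix Filter Topology

noncomputable def opNorm {m n : ℕ} (A : Matrix (Fin m) (Fin n) ℝ) : ℝ :=
  ‖LinearMap.toContinuousLinearMap (Matrix.toEuclideanLin A)‖

/-- The PDHG matrix `P_s = [[(1/s)Iₙ, -Aᵀ], [-A, (1/s)Iₘ]]`. -/
noncomputable def Ps {m n : ℕ} (s : ℝ) (A : Matrix (Fin m) (Fin n) ℝ) :
    Matrix (Fin n ⊕ Fin m) (Fin n ⊕ Fin m) ℝ :=
  Matrix.fromBlocks ((1/s) • 1) (-Aᵀ) (-A) ((1/s) • 1)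

namespace LinearMap.BilinForm

variable {V : Type*} [AddCommGroup V] [Module ℝ V] {B : LinearMap.BilinForm ℝ V}

lemma IsSymm.apply_add_add (hB : B.IsSymm) (u v : V) :
    B (u + v) (u + v) = B u u + 2 * B u v + B v v := by
  simp only [map_add, LinearMap.add_apply]
  rw [hB.eq v u]
  ring

lemma IsPosSemidef.apply_le_sqrt_mul_sqrt (hB : B.IsPosSemidef) (u v : V) :
    B u v ≤ √(B u u) * √(B v v) := by
  rw [← Real.sqrt_mul (hB.nonneg u)]
  exact (le_abs_self _).trans <| Real.abs_le_sqrt <|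
    B.apply_sq_le_of_symm hB.nonneg (isSymm_iff.mp hB.isSymm) u v

lemma IsPosSemidef.sqrt_apply_add_le (hB : B.IsPosSemidef) (u v : V) :
    √(B (u + v) (u + v)) ≤ √(B u u) + √(B v v) := by
  refine Real.sqrt_le_iff.mpr ⟨by positivity, ?_⟩
  rw [hB.isSymm.apply_add_add, add_sq, Real.sq_sqrt (hB.nonneg u), Real.sq_sqrt (hB.nonneg v)]
  linarith [hB.apply_le_sqrt_mul_sqrt u v]

end LinearMap.BilinForm

namespace ProximalPoint

variable {V : Type*} [AddCommGroup V] [Module ℝ V] {B : LinearMap.BilinForm ℝ V}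
  {G : V → V → ℝ} {z : ℕ → V} {zs : V}

lemma dist_sq_succ_add_step_sq_le (hB : B.IsSymm) (hsaddle : ∀ w, 0 ≤ G w zs)
    (hstep : ∀ k w, G (z (k + 1)) w ≤ B (z k - z (k + 1)) (z (k + 1) - w)) (k : ℕ) :
    B (z (k + 1) - zs) (z (k + 1) - zs) + B (z k - z (k + 1)) (z k - z (k + 1)) ≤
      B (z k - zs) (z k - zs) := by
  have hsplit : z k - zs = (z k - z (k + 1)) + (z (k + 1) - zs) := by abel
  rw [hsplit, hB.apply_add_add]
  linarith [hsaddle (z (k + 1)), hstep k zs]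

lemma dist_sq_antitone (hB : B.IsPosSemidef) (hsaddle : ∀ w, 0 ≤ G w zs)
    (hstep : ∀ k w, G (z (k + 1)) w ≤ B (z k - z (k + 1)) (z (k + 1) - w)) :
    Antitone fun k ↦ B (z k - zs) (z k - zs) :=
  antitone_nat_of_succ_le fun k ↦ by
    linarith [dist_sq_succ_add_step_sq_le hB.isSymm hsaddle hstep k, hB.nonneg (z k - z (k + 1))]

lemma step_sq_antitone (hB : B.IsPosSemidef) (hG : ∀ u w, G u w = -G w u)
    (hstep : ∀ k w, G (z (k + 1)) w ≤ B (z k - z (k + 1)) (z (k + 1) - w)) :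
    Antitone fun k ↦ B (z k - z (k + 1)) (z k - z (k + 1)) := by
  refine antitone_nat_of_succ_le fun k ↦ ?_
  set d : ℕ → V := fun k ↦ z k - z (k + 1)
  have hback : z (k + 2) - z (k + 1) = -d (k + 1) := (neg_sub _ _).symm
  -- testing the steps `k` and `k + 1` against each other's iterate, the gaps cancel
  have hcross : B (d (k + 1)) (d (k + 1)) ≤ B (d k) (d (k + 1)) := by
    have h₁ := hstep k (z (k + 2))
    have h₂ := hstep (k + 1) (z (k + 1))
    rw [hback, map_neg, hG] at h₂
    linarith
  have hsqrt : √(B (d (k + 1)) (d (k + 1))) ≤ √(B (d k) (d k)) := by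
    have := hcross.trans (hB.apply_le_sqrt_mul_sqrt (d k) (d (k + 1)))
    nlinarith [Real.mul_self_sqrt (hB.nonneg (d (k + 1))), Real.sqrt_nonneg (B (d k) (d k)),
      Real.sqrt_nonneg (B (d (k + 1)) (d (k + 1)))]
  exact (Real.sqrt_le_sqrt_iff (hB.nonneg _)).mp hsqrt

lemma succ_mul_step_sq_le (hB : B.IsPosSemidef) (hG : ∀ u w, G u w = -G w u)
    (hsaddle : ∀ w, 0 ≤ G w zs)
    (hstep : ∀ k w, G (z (k + 1)) w ≤ B (z k - z (k + 1)) (z (k + 1) - w)) (k : ℕ) :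
    (k + 1 : ℝ) * B (z k - z (k + 1)) (z k - z (k + 1)) ≤ B (z 0 - zs) (z 0 - zs) := by
  have htelescope : ∀ K, ∑ j ∈ Finset.range K, B (z j - z (j + 1)) (z j - z (j + 1)) +
      B (z K - zs) (z K - zs) ≤ B (z 0 - zs) (z 0 - zs) := by
    intro K
    induction K with
    | zero => simp
    | succ K ih =>
      rw [Finset.sum_range_succ]
      linarith [dist_sq_succ_add_step_sq_le hB.isSymm hsaddle hstep K]
  have hlast := Finset.card_nsmul_le_sum (Finset.range (k + 1)) _ _ fun j hj ↦
    step_sq_antitone hB hG hstep (Finset.mem_range_succ_iff.mp hj)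
  rw [Finset.card_range, nsmul_eq_mul, Nat.cast_succ] at hlast
  linarith [htelescope (k + 1), hB.nonneg (z (k + 1) - zs)]

theorem gap_le (hB : B.IsPosSemidef) (hG : ∀ u w, G u w = -G w u)
    (hsaddle : ∀ w, 0 ≤ G w zs)
    (hstep : ∀ k w, G (z (k + 1)) w ≤ B (z k - z (k + 1)) (z (k + 1) - w))
    (k : ℕ) (hk : 1 ≤ k) (w : V) :
    G (z k) w ≤ 1 / √k * (B (z 0 - zs) (z 0 - zs) +
      √(B (z 0 - zs) (z 0 - zs)) * √(B (zs - w) (zs - w))) := by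
  obtain ⟨k, rfl⟩ := Nat.exists_eq_add_of_le' hk
  set D := √(B (z 0 - zs) (z 0 - zs))
  have hk_pos : (0 : ℝ) < k + 1 := by positivity
  have hstep_sq : √(B (z k - z (k + 1)) (z k - z (k + 1))) ≤ D / √(k + 1) := by
    rw [← Real.sqrt_div' _ hk_pos.le]
    exact Real.sqrt_le_sqrt ((le_div_iff₀' hk_pos).mpr (succ_mul_step_sq_le hB hG hsaddle hstep k))
  have hdist : √(B (z (k + 1) - w) (z (k + 1) - w)) ≤ D + √(B (zs - w) (zs - w)) := by
    have := hB.sqrt_apply_add_le (z (k + 1) - zs) (zs - w)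
    rw [sub_add_sub_cancel] at this
    linarith [Real.sqrt_le_sqrt (dist_sq_antitone hB hsaddle hstep (Nat.zero_le (k + 1)))]
  calc G (z (k + 1)) w ≤ B (z k - z (k + 1)) (z (k + 1) - w) := hstep k w
    _ ≤ √(B (z k - z (k + 1)) (z k - z (k + 1))) * √(B (z (k + 1) - w) (z (k + 1) - w)) :=
      hB.apply_le_sqrt_mul_sqrt _ _
    _ ≤ D / √(k + 1) * (D + √(B (zs - w) (zs - w))) := by
      gcongr
    _ = _ := by
      rw [Nat.cast_succ, ← Real.mul_self_sqrt (hB.nonneg (z 0 - zs))]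
      ring

end ProximalPoint

/-- `p = prox_f^s(a)`. -/
def IsProxPoint {ι : Type*} [Fintype ι] (s : ℝ) (f : (ι → ℝ) → ℝ) (a p : ι → ℝ) : Prop :=
  ∀ u, f p + 1 / (2 * s) * ((p - a) ⬝ᵥ (p - a)) ≤ f u + 1 / (2 * s) * ((u - a) ⬝ᵥ (u - a))

lemma IsProxPoint.le_add_dotProduct {ι : Type*} [Fintype ι] {s : ℝ} {f : (ι → ℝ) → ℝ}
    {a p : ι → ℝ} (hp : IsProxPoint s f a p) (hf : ConvexOn ℝ Set.univ f)
    (u : ι → ℝ) : f p ≤ f u + 1 / s * ((p - a) ⬝ᵥ (u - p)) := by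
  set w := p - a
  set d := u - p
  set c := 1 / (2 * s) * (d ⬝ᵥ d)
  -- compare `p` with the points `p + t • d` of the segment towards `u`, and let `t → 0`
  have hsegment : ∀ t ∈ Set.Ioo (0 : ℝ) 1, f p - f u - 1 / s * (w ⬝ᵥ d) ≤ t * c := by
    rintro t ⟨ht₀, ht₁⟩
    have hcvx : f (p + t • d) ≤ (1 - t) * f p + t * f u := by
      have := hf.2 (Set.mem_univ p) (Set.mem_univ u) (sub_nonneg.2 ht₁.le) ht₀.le
        (sub_add_cancel 1 t)
      rwa [show (1 - t) • p + t • u = p + t • d by simp only [d]; module, smul_eq_mul,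
        smul_eq_mul] at this
    have hprox := hp (p + t • d)
    rw [show p + t • d - a = w + t • d by simp only [w]; abel] at hprox
    simp only [add_dotProduct, dotProduct_add, smul_dotProduct, dotProduct_smul, smul_eq_mul,
      dotProduct_comm d w] at hprox
    have : t * (f p - f u - 1 / s * (w ⬝ᵥ d)) ≤ t * (t * c) := by
      linear_combination hprox + hcvx
    exact le_of_mul_le_mul_left this ht₀
  have hlim : Tendsto (fun t ↦ t * c) (𝓝[>] 0) (𝓝 0) := by
    simpa using ((continuous_mul_const c).tendsto 0).mono_left nhdsWithin_le_nhds
  have := ge_of_tendsto hlim (Filter.mem_of_superset (Ioo_mem_nhdsGT one_pos) hsegment)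
  linarith

lemma sumElim_dotProduct_Ps_mulVec {m n : ℕ} (s : ℝ) (A : Matrix (Fin m) (Fin n) ℝ)
    (x₁ x₂ : Fin n → ℝ) (y₁ y₂ : Fin m → ℝ) :
    Sum.elim x₁ y₁ ⬝ᵥ Ps s A *ᵥ Sum.elim x₂ y₂ =
      1 / s * (x₁ ⬝ᵥ x₂) + 1 / s * (y₁ ⬝ᵥ y₂) - A *ᵥ x₁ ⬝ᵥ y₂ - A *ᵥ x₂ ⬝ᵥ y₁ := by
  simp only [Ps, fromBlocks_mulVec, Sum.elim_comp_inl, Sum.elim_comp_inr,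
    sumElim_dotProduct_sumElim, smul_mulVec, one_mulVec, neg_mulVec, dotProduct_add,
    dotProduct_smul, dotProduct_neg, smul_eq_mul, dotProduct_transpose_mulVec]
  rw [dotProduct_comm y₂, dotProduct_comm y₁]
  ring

lemma isSymm_Ps {m n : ℕ} (s : ℝ) (A : Matrix (Fin m) (Fin n) ℝ) : (Ps s A).IsSymm :=
  .fromBlocks (by simp [IsSymm]) (by simp) (by simp [IsSymm])

lemma mulVec_dotProduct_le_opNorm {m n : ℕ} (A : Matrix (Fin m) (Fin n) ℝ) (x : Fin n → ℝ)
    (y : Fin m → ℝ) :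
    A *ᵥ x ⬝ᵥ y ≤ opNorm A * ‖WithLp.toLp 2 x‖ * ‖WithLp.toLp 2 y‖ :=
  calc A *ᵥ x ⬝ᵥ y = inner ℝ (toEuclideanLin A (WithLp.toLp 2 x)) (WithLp.toLp 2 y) := by
        simp [EuclideanSpace.inner_toLp_toLp, dotProduct_comm]
    _ ≤ ‖toEuclideanLin A (WithLp.toLp 2 x)‖ * ‖WithLp.toLp 2 y‖ := real_inner_le_norm _ _
    _ ≤ opNorm A * ‖WithLp.toLp 2 x‖ * ‖WithLp.toLp 2 y‖ := by
        gcongr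
        exact (LinearMap.toContinuousLinearMap (toEuclideanLin A)).le_opNorm _

lemma dotProduct_self_eq_norm_sq {n : ℕ} (x : Fin n → ℝ) : x ⬝ᵥ x = ‖WithLp.toLp 2 x‖ ^ 2 := by
  rw [← real_inner_self_eq_norm_sq, EuclideanSpace.inner_toLp_toLp, star_trivial]

lemma isPosSemidef_toBilin'_Ps {m n : ℕ} {s : ℝ} {A : Matrix (Fin m) (Fin n) ℝ} (hs : 0 < s)
    (hsA : s * opNorm A ≤ 1) : (Ps s A).toBilin'.IsPosSemidef where
  isSymm := isSymm_toBilin'_iff_isSymm.mpr (isSymm_Ps s A)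
  nonneg v := by
    rw [toBilin'_apply', ← Sum.elim_comp_inl_inr v, sumElim_dotProduct_Ps_mulVec,
      dotProduct_self_eq_norm_sq, dotProduct_self_eq_norm_sq]
    have hA := mulVec_dotProduct_le_opNorm A (v ∘ Sum.inl) (v ∘ Sum.inr)
    set a := ‖WithLp.toLp 2 (v ∘ Sum.inl)‖
    set b := ‖WithLp.toLp 2 (v ∘ Sum.inr)‖
    have hab : s * opNorm A * (a * b) ≤ a * b := mul_le_of_le_one_left (by positivity) hsA
    rw [← mul_nonneg_iff_of_pos_left hs]
    field_simp
    linarith [mul_le_mul_of_nonneg_left hA hs.le, sq_nonneg (a - b)]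

/-- Pairs `(x, y)` are stored as `Sum.elim x y`, matching the block structure of `Ps`. -/
def saddleGap {α β : Type*} (L : (α → ℝ) → (β → ℝ) → ℝ) (z w : α ⊕ β → ℝ) : ℝ :=
  L (z ∘ Sum.inl) (w ∘ Sum.inr) - L (w ∘ Sum.inl) (z ∘ Sum.inr)

lemma saddleGap_swap {α β : Type*} (L : (α → ℝ) → (β → ℝ) → ℝ) (z w : α ⊕ β → ℝ) :
    saddleGap L z w = -saddleGap L w z :=
  (neg_sub _ _).symm

lemma pdhg_step {m n : ℕ} {s : ℝ} (hs : s ≠ 0) {A : Matrix (Fin m) (Fin n) ℝ}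
    {f : (Fin n → ℝ) → ℝ} {g : (Fin m → ℝ) → ℝ}
    (hf : ConvexOn ℝ Set.univ f) (hg : ConvexOn ℝ Set.univ g)
    {L : (Fin n → ℝ) → (Fin m → ℝ) → ℝ} (hL : ∀ x y, L x y = f x + A *ᵥ x ⬝ᵥ y - g y)
    {x x' : Fin n → ℝ} {y y' : Fin m → ℝ} (hx : IsProxPoint s f (x - s • Aᵀ *ᵥ y) x')
    (hy : IsProxPoint s g (y + s • A *ᵥ ((2 : ℝ) • x' - x)) y') (w : Fin n ⊕ Fin m → ℝ) :
    saddleGap L (Sum.elim x' y') w ≤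
      (Ps s A).toBilin' (Sum.elim x y - Sum.elim x' y') (Sum.elim x' y' - w) := by
  obtain ⟨u, v, rfl⟩ : ∃ u v, w = Sum.elim u v := ⟨_, _, (Sum.elim_comp_inl_inr w).symm⟩
  have hkey : 1 / s * ((x' - (x - s • Aᵀ *ᵥ y)) ⬝ᵥ (u - x')) +
      1 / s * ((y' - (y + s • A *ᵥ ((2 : ℝ) • x' - x))) ⬝ᵥ (v - y')) +
      A *ᵥ x' ⬝ᵥ v - A *ᵥ u ⬝ᵥ y' =
      Sum.elim (x - x') (y - y') ⬝ᵥ Ps s A *ᵥ Sum.elim (x' - u) (y' - v) := by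
    rw [sumElim_dotProduct_Ps_mulVec]
    simp only [sub_dotProduct, dotProduct_sub, add_dotProduct, smul_dotProduct, mulVec_sub,
      mulVec_smul, smul_eq_mul, mulVec_transpose, ← dotProduct_mulVec]
    rw [dotProduct_comm y (A *ᵥ u), dotProduct_comm y (A *ᵥ x')]
    field_simp
    ring
  rw [toBilin'_apply', ← Sum.elim_sub_sub, ← Sum.elim_sub_sub, ← hkey]
  simp only [saddleGap, Sum.elim_comp_inl, Sum.elim_comp_inr, hL]
  linarith [hx.le_add_dotProduct hf u, hy.le_add_dotProduct hg v]

/-- Last-iterate `O(1/√k)` bound on the primal-dual gap of PDHG: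
iterates are given by the prox (minimizer) characterization, `(xs, ys)` is a
saddle point of `L(x,y) = f(x) + ⟨Ax, y⟩ - g(y)`. -/
theorem stmt8 {m n : ℕ} (s : ℝ) (A : Matrix (Fin m) (Fin n) ℝ)
    (f : (Fin n → ℝ) → ℝ) (g : (Fin m → ℝ) → ℝ)
    (hf : ConvexOn ℝ Set.univ f) (hg : ConvexOn ℝ Set.univ g)
    (hs : 0 < s) (hsA : s * opNorm A < 1)
    (L : (Fin n → ℝ) → (Fin m → ℝ) → ℝ)
    (hL : ∀ x y, L x y = f x + (A.mulVec x) ⬝ᵥ y - g y)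
    (x : ℕ → Fin n → ℝ) (y : ℕ → Fin m → ℝ)
    (hx : ∀ k, ∀ u : Fin n → ℝ,
      f (x (k+1)) + (1/(2*s)) * ((x (k+1) - (x k - s • Aᵀ.mulVec (y k))) ⬝ᵥ
          (x (k+1) - (x k - s • Aᵀ.mulVec (y k))))
        ≤ f u + (1/(2*s)) * ((u - (x k - s • Aᵀ.mulVec (y k))) ⬝ᵥ
          (u - (x k - s • Aᵀ.mulVec (y k)))))
    (hy : ∀ k, ∀ v : Fin m → ℝ,
      g (y (k+1)) + (1/(2*s)) * ((y (k+1) - (y k + s • A.mulVec ((2:ℝ) • x (k+1) - x k))) ⬝ᵥ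
          (y (k+1) - (y k + s • A.mulVec ((2:ℝ) • x (k+1) - x k))))
        ≤ g v + (1/(2*s)) * ((v - (y k + s • A.mulVec ((2:ℝ) • x (k+1) - x k))) ⬝ᵥ
          (v - (y k + s • A.mulVec ((2:ℝ) • x (k+1) - x k)))))
    (xs : Fin n → ℝ) (ys : Fin m → ℝ)
    (hsaddle : ∀ x' y', L xs y' ≤ L x' ys) :
    ∀ k : ℕ, 1 ≤ k → ∀ (x' : Fin n → ℝ) (y' : Fin m → ℝ),
      L (x k) y' - L x' (y k) ≤
        (1 / Real.sqrt k) *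
          (qf (Ps s A) (Sum.elim (x 0) (y 0) - Sum.elim xs ys) +
            Real.sqrt (qf (Ps s A) (Sum.elim (x 0) (y 0) - Sum.elim xs ys)) *
              Real.sqrt (qf (Ps s A) (Sum.elim xs ys - Sum.elim x' y'))) := by
  intro k hk x' y'
  have hgap_nonneg (w : Fin n ⊕ Fin m → ℝ) : 0 ≤ saddleGap L w (Sum.elim xs ys) :=
    sub_nonneg.mpr (hsaddle _ _)
  simpa only [saddleGap, qf, toBilin'_apply', Sum.elim_comp_inl, Sum.elim_comp_inr] using
    ProximalPoint.gap_le (z := fun k ↦ Sum.elim (x k) (y k))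
      (isPosSemidef_toBilin'_Ps hs hsA.le) (saddleGap_swap L) hgap_nonneg
      (fun k ↦ pdhg_step hs.ne' hf hg hL (hx k) (hy k)) k hk (Sum.elim x' y')
end

section
/- Let a_k ∈ R² satisfy a_{k+1} = M a_k where M = [[1 - 2s²σ², -sσ], [sσ, 1]] with σ > 0 and sσ < 1/2. Then for all k ≥ 0, ‖a_k‖² ≥ (1/3)(1 - s²σ²)^k ‖a_0‖². -/
/-!
With `ε = sσ`, the matrix `M` rescales the quadratic form
`Q(x, y) = x² + y² + 2εxy` by exactly `1 - ε²`, so `Q(a_k) = (1 - ε²)^k Q(a_0)`.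
Since `(1 - |ε|)‖v‖² ≤ Q(v) ≤ (1 + |ε|)‖v‖²`, this gives
`‖a_k‖² ≥ (1 - ε)/(1 + ε) · (1 - ε²)^k ‖a_0‖²`, and `(1 - ε)/(1 + ε) ≥ 1/3` for `ε ≤ 1/2`.
-/

open Matrix

namespace SkewStep

def stepMatrix (ε : ℝ) : Matrix (Fin 2) (Fin 2) ℝ := !![1 - 2 * ε ^ 2, -ε; ε, 1]

def lyapunovForm (ε : ℝ) (v : Fin 2 → ℝ) : ℝ := v 0 ^ 2 + v 1 ^ 2 + 2 * ε * v 0 * v 1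

theorem dotProduct_self_fin_two (v : Fin 2 → ℝ) : v ⬝ᵥ v = v 0 ^ 2 + v 1 ^ 2 := by
  simp [dotProduct, Fin.sum_univ_two, sq]

theorem lyapunovForm_stepMatrix_mulVec (ε : ℝ) (v : Fin 2 → ℝ) :
    lyapunovForm ε (stepMatrix ε *ᵥ v) = (1 - ε ^ 2) * lyapunovForm ε v := by
  simp only [lyapunovForm, stepMatrix, mulVec, dotProduct, Fin.sum_univ_two, of_apply, cons_val',
    cons_val_zero, cons_val_one, empty_val', cons_val_fin_one]
  ring

theorem lyapunovForm_of_recursion {ε : ℝ} {a : ℕ → Fin 2 → ℝ}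
    (ha : ∀ k, a (k + 1) = stepMatrix ε *ᵥ a k) (k : ℕ) :
    lyapunovForm ε (a k) = (1 - ε ^ 2) ^ k * lyapunovForm ε (a 0) := by
  induction k with
  | zero => simp
  | succ k ih => rw [ha, lyapunovForm_stepMatrix_mulVec, ih, pow_succ]; ring

theorem abs_two_mul_mul_mul_le (ε x y : ℝ) : |2 * ε * x * y| ≤ |ε| * (x ^ 2 + y ^ 2) :=
  calc |2 * ε * x * y| = |ε| * |2 * x * y| := by rw [← abs_mul]; ring_nf
    _ ≤ |ε| * (x ^ 2 + y ^ 2) := by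
      gcongr
      exact abs_le.mpr ⟨by nlinarith [sq_nonneg (x + y)], by nlinarith [sq_nonneg (x - y)]⟩

theorem lyapunovForm_le (ε : ℝ) (v : Fin 2 → ℝ) :
    lyapunovForm ε v ≤ (1 + |ε|) * (v ⬝ᵥ v) := by
  have := (abs_le.mp (abs_two_mul_mul_mul_le ε (v 0) (v 1))).2
  rw [lyapunovForm, dotProduct_self_fin_two]
  linarith

theorem le_lyapunovForm (ε : ℝ) (v : Fin 2 → ℝ) :
    (1 - |ε|) * (v ⬝ᵥ v) ≤ lyapunovForm ε v := by
  have := (abs_le.mp (abs_two_mul_mul_mul_le ε (v 0) (v 1))).1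
  rw [lyapunovForm, dotProduct_self_fin_two]
  linarith

theorem dotProduct_self_lower_bound_of_recursion {ε : ℝ} (hε : |ε| ≤ 1) {a : ℕ → Fin 2 → ℝ}
    (ha : ∀ k, a (k + 1) = stepMatrix ε *ᵥ a k) (k : ℕ) :
    (1 - |ε|) / (1 + |ε|) * (1 - ε ^ 2) ^ k * (a 0 ⬝ᵥ a 0) ≤ a k ⬝ᵥ a k := by
  have hpos : 0 < 1 + |ε| := by positivity
  have hdecay : 0 ≤ (1 - ε ^ 2) ^ k := pow_nonneg (by nlinarith [sq_abs ε, abs_nonneg ε]) k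
  rw [div_mul_eq_mul_div, div_mul_eq_mul_div, div_le_iff₀ hpos]
  calc (1 - |ε|) * (1 - ε ^ 2) ^ k * (a 0 ⬝ᵥ a 0)
      = (1 - ε ^ 2) ^ k * ((1 - |ε|) * (a 0 ⬝ᵥ a 0)) := by ring
    _ ≤ (1 - ε ^ 2) ^ k * lyapunovForm ε (a 0) := by gcongr; exact le_lyapunovForm ε (a 0)
    _ = lyapunovForm ε (a k) := (lyapunovForm_of_recursion ha k).symm
    _ ≤ (1 + |ε|) * (a k ⬝ᵥ a k) := lyapunovForm_le ε (a k)
    _ = (a k ⬝ᵥ a k) * (1 + |ε|) := mul_comm _ _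

end SkewStep

open SkewStep in
theorem stmt10 (s σ : ℝ) (hs : 0 < s) (hσ : 0 < σ) (hsσ : s * σ < 1/2)
    (a : ℕ → Fin 2 → ℝ)
    (ha : ∀ k, a (k+1) = (!![1 - 2*s^2*σ^2, -(s*σ); s*σ, 1]).mulVec (a k)) :
    ∀ k : ℕ, (1/3) * (1 - s^2*σ^2)^k * (a 0 ⬝ᵥ a 0) ≤ a k ⬝ᵥ a k := by
  intro k
  have hε : 0 < s * σ := mul_pos hs hσ
  have hstep : ∀ k, a (k + 1) = stepMatrix (s * σ) *ᵥ a k := by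
    rwa [stepMatrix, mul_pow, ← mul_assoc]
  have hbound := dotProduct_self_lower_bound_of_recursion (by rw [abs_of_pos hε]; linarith) hstep k
  rw [abs_of_pos hε, mul_pow] at hbound
  have hthird : 1 / 3 ≤ (1 - s * σ) / (1 + s * σ) := by
    rw [div_le_div_iff₀ (by norm_num) (by linarith)]
    linarith
  have hdecay : 0 ≤ (1 - s ^ 2 * σ ^ 2) ^ k := pow_nonneg (by nlinarith) k
  have hnorm : 0 ≤ a 0 ⬝ᵥ a 0 := by rw [dotProduct_self_fin_two]; positivity
  exact le_trans (by gcongr) hbound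
end

section
/- For the standard-form LP minimax Lagrangian with x ≥ 0, the KKT residual ‖(Ax - b, [A^T y - c]^+, [c^T x - b^T y]^+)‖² is bounded above by (1 + 4R²)·dist²(0, F(z)) for any z = (x,y) with x ≥ 0 and ‖z‖ ≤ R, where F(z) = (c - A^T y + N_{R_+^n}(x), Ax - b) is the subdifferential operator of the Lagrangian L(x,y) = c^T x - y^T A x + b^T y + ι_{x≥0}. -/
open Matrix BigOperators

/-- Normal cone of the nonnegative orthant at `x`. -/
def normalConeNonneg {n : ℕ} (x : Fin n → ℝ) : Set (Fin n → ℝ) :=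
  {g | ∀ u : Fin n → ℝ, (∀ i, 0 ≤ u i) → g ⬝ᵥ (u - x) ≤ 0}

lemma dot_self_nonneg' {k : ℕ} (f : Fin k → ℝ) : 0 ≤ f ⬝ᵥ f :=
  Finset.sum_nonneg fun i _ => mul_self_nonneg (f i)

lemma dot_sq_le {k : ℕ} (f g : Fin k → ℝ) : (f ⬝ᵥ g) ^ 2 ≤ (f ⬝ᵥ f) * (g ⬝ᵥ g) := by
  have h := Finset.sum_mul_sq_le_sq_mul_sq (Finset.univ : Finset (Fin k)) f g
  simpa [dotProduct, sq] using h

/-- For the standard-form LP Lagrangian `L(x,y) = cᵀx - yᵀAx + bᵀy + ι_{x≥0}(x)` with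
subdifferential operator `F(z) = (c - Aᵀy + N_{ℝ₊ⁿ}(x), Ax - b)`, the squared KKT
residual is bounded by `(1 + 4R²)·dist²(0, F(z))` whenever `x ≥ 0` and `‖z‖ ≤ R`. -/
theorem stmt14 {m n : ℕ} (A : Matrix (Fin m) (Fin n) ℝ)
    (b : Fin m → ℝ) (c : Fin n → ℝ) (R : ℝ)
    (x : Fin n → ℝ) (y : Fin m → ℝ)
    (hx : ∀ i, 0 ≤ x i)
    (hR : Real.sqrt (x ⬝ᵥ x + y ⬝ᵥ y) ≤ R) :
    (A.mulVec x - b) ⬝ᵥ (A.mulVec x - b) +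
      (∑ j, max ((Aᵀ.mulVec y - c) j) 0 ^ 2) +
      max (c ⬝ᵥ x - b ⬝ᵥ y) 0 ^ 2
      ≤ (1 + 4 * R^2) *
        sInf ((fun w : (Fin n → ℝ) × (Fin m → ℝ) => w.1 ⬝ᵥ w.1 + w.2 ⬝ᵥ w.2) ''
          {w | ∃ g ∈ normalConeNonneg x, w = (c - Aᵀ.mulVec y + g, A.mulVec x - b)}) := by
  set S := ((fun w : (Fin n → ℝ) × (Fin m → ℝ) => w.1 ⬝ᵥ w.1 + w.2 ⬝ᵥ w.2) ''
      {w | ∃ g ∈ normalConeNonneg x, w = (c - Aᵀ.mulVec y + g, A.mulVec x - b)}) with hS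
  have h0N : (0 : Fin n → ℝ) ∈ normalConeNonneg x := by
    intro u hu; simp [dotProduct]
  have hne : S.Nonempty := ⟨_, ⟨(c - Aᵀ.mulVec y + 0, A.mulVec x - b), ⟨0, h0N, rfl⟩, rfl⟩⟩
  -- bound x⬝x + y⬝y by R²
  have hs0 : 0 ≤ x ⬝ᵥ x + y ⬝ᵥ y := add_nonneg (dot_self_nonneg' x) (dot_self_nonneg' y)
  have hR2 : x ⬝ᵥ x + y ⬝ᵥ y ≤ R ^ 2 := by
    nlinarith [Real.sq_sqrt hs0, Real.sqrt_nonneg (x ⬝ᵥ x + y ⬝ᵥ y)]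
  have hRnn : (0:ℝ) ≤ R := le_trans (Real.sqrt_nonneg _) hR
  have hK : (0:ℝ) < 1 + 4 * R ^ 2 := by positivity
  set L := (A.mulVec x - b) ⬝ᵥ (A.mulVec x - b) +
      (∑ j, max ((Aᵀ.mulVec y - c) j) 0 ^ 2) +
      max (c ⬝ᵥ x - b ⬝ᵥ y) 0 ^ 2 with hL
  have key : ∀ d ∈ S, L ≤ (1 + 4 * R ^ 2) * d := by
    rintro d ⟨w, ⟨g, hg, rfl⟩, rfl⟩
    simp only
    set w1 := c - Aᵀ.mulVec y + g with hw1
    set w2 := A.mulVec x - b with hw2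
    -- properties of g
    have hg0 : ∀ i, g i ≤ 0 := by
      intro i
      have := hg (x + Pi.single i 1) (fun j => by
        rcases eq_or_ne j i with h | h
        · subst h; simpa using add_nonneg (hx j) zero_le_one
        · simpa [Pi.single_apply, h] using hx j)
      simpa [dotProduct_single] using this
    have hgx : g ⬝ᵥ x = 0 := by
      have h1 := hg 0 (fun j => le_refl 0)
      have h2 := hg (x + x) (fun j => add_nonneg (hx j) (hx j))
      simp [dotProduct_sub, dotProduct_add] at h1 h2
      linarith
    -- term 1
    have t1 : (A.mulVec x - b) ⬝ᵥ (A.mulVec x - b) = w2 ⬝ᵥ w2 := rfl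
    -- term 2
    have t2 : (∑ j, max ((Aᵀ.mulVec y - c) j) 0 ^ 2) ≤ w1 ⬝ᵥ w1 := by
      have : w1 ⬝ᵥ w1 = ∑ j, w1 j ^ 2 := by simp [dotProduct, sq]
      rw [this]
      apply Finset.sum_le_sum
      intro j _
      have hwj : w1 j = c j - Aᵀ.mulVec y j + g j := rfl
      have haj : (Aᵀ.mulVec y - c) j = Aᵀ.mulVec y j - c j := rfl
      rcases le_or_gt ((Aᵀ.mulVec y - c) j) 0 with h | h
      · rw [max_eq_right h]; simpa using sq_nonneg (w1 j)
      · rw [max_eq_left h.le]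
        rw [haj] at h ⊢
        nlinarith [hg0 j]
    -- term 3 : gap identity
    have gap : c ⬝ᵥ x - b ⬝ᵥ y = w1 ⬝ᵥ x + w2 ⬝ᵥ y := by
      have h1 : Aᵀ.mulVec y ⬝ᵥ x = y ⬝ᵥ A.mulVec x := by
        rw [Matrix.mulVec_transpose, ← Matrix.dotProduct_mulVec]
      have h2 : (A.mulVec x) ⬝ᵥ y = y ⬝ᵥ A.mulVec x := dotProduct_comm _ _
      rw [hw1, hw2]
      rw [add_dotProduct, sub_dotProduct, sub_dotProduct, hgx, h1, h2]
      ring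
    have P := dot_self_nonneg' w1
    have Q := dot_self_nonneg' w2
    have X := dot_self_nonneg' x
    have Y := dot_self_nonneg' y
    have cs1 := dot_sq_le w1 x
    have cs2 := dot_sq_le w2 y
    have t3 : max (c ⬝ᵥ x - b ⬝ᵥ y) 0 ^ 2 ≤ 4 * R ^ 2 * (w1 ⬝ᵥ w1 + w2 ⬝ᵥ w2) := by
      have hmax : max (c ⬝ᵥ x - b ⬝ᵥ y) 0 ^ 2 ≤ (w1 ⬝ᵥ x + w2 ⬝ᵥ y) ^ 2 := by
        rw [gap]
        rcases le_or_gt (w1 ⬝ᵥ x + w2 ⬝ᵥ y) 0 with h | h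
        · rw [max_eq_right h]; simpa using sq_nonneg (w1 ⬝ᵥ x + w2 ⬝ᵥ y)
        · rw [max_eq_left h.le]
      refine le_trans hmax ?_
      nlinarith [sq_nonneg (w1 ⬝ᵥ x - w2 ⬝ᵥ y), mul_le_mul_of_nonneg_left hR2 P,
        mul_le_mul_of_nonneg_left hR2 Q]
    rw [hL, t1]
    nlinarith [t2, t3, P, Q]
  have h1 : L / (1 + 4 * R ^ 2) ≤ sInf S := by
    apply le_csInf hne
    intro d hd
    rw [div_le_iff₀ hK]
    calc L ≤ (1 + 4 * R ^ 2) * d := key d hd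
      _ = d * (1 + 4 * R ^ 2) := mul_comm _ _
  calc L = (1 + 4 * R ^ 2) * (L / (1 + 4 * R ^ 2)) := by field_simp
    _ ≤ (1 + 4 * R ^ 2) * sInf S := mul_le_mul_of_nonneg_left h1 hK.le
end

section
/- If the update rule P(z_k - z_{k+1}) ∈ F(z_{k+1}) holds with P symmetric positive semidefinite (possibly singular), and the generalized IDS dist²_{P^-}(0, F(z_k) ∩ range(P)) = 0 at iterate k, then 0 ∈ F(z_{k+1}). -/
open Matrix

def mrange {ι : Type*} [Fintype ι] (P : Matrix ι ι ℝ) : Set (ι → ℝ) :=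
  {w | ∃ u, w = P.mulVec u}

/-! Write `v = z_k - z_{k+1}`, so `P v ∈ F(z_{k+1})`. For `w = P s ∈ F(z_k) ∩ range P`,
monotonicity gives `‖v‖²_P ≤ ⟨w, v⟩`, and `2⟨P s, v⟩ ≤ ‖v‖²_P + ‖s‖²_P = ‖v‖²_P + ‖w‖²_{P⁻}`
(using `P P⁻ P = P`), so `‖v‖²_P ≤ ‖w‖²_{P⁻}`. A vanishing infimum thus forces `‖v‖²_P = 0`,
i.e. `P v = 0`. -/

namespace Matrix.PosSemidef

variable {ι : Type*} [Fintype ι] {P : Matrix ι ι ℝ}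

theorem qf_nonneg (hP : P.PosSemidef) (v : ι → ℝ) : 0 ≤ qf P v :=
  hP.dotProduct_mulVec_nonneg v

theorem qf_eq_zero_iff (hP : P.PosSemidef) (v : ι → ℝ) : qf P v = 0 ↔ P *ᵥ v = 0 :=
  hP.dotProduct_mulVec_zero_iff v

theorem mulVec_dotProduct_comm (hP : P.PosSemidef) (s v : ι → ℝ) :
    P *ᵥ s ⬝ᵥ v = P *ᵥ v ⬝ᵥ s := by
  have hPt : Pᵀ = P := by simpa using hP.isHermitian.eq
  rw [dotProduct_comm, dotProduct_mulVec, ← mulVec_transpose, hPt]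

theorem two_mul_mulVec_dotProduct_le (hP : P.PosSemidef) (s v : ι → ℝ) :
    2 * (P *ᵥ s ⬝ᵥ v) ≤ qf P v + qf P s := by
  have hexp : qf P (v - s) = qf P v - 2 * (P *ᵥ s ⬝ᵥ v) + qf P s := by
    simp only [qf, mulVec_sub, dotProduct_sub, sub_dotProduct]
    rw [dotProduct_comm v (P *ᵥ s), dotProduct_comm s (P *ᵥ v), hP.mulVec_dotProduct_comm s v]
    ring
  linarith [hP.qf_nonneg (v - s)]

theorem qf_pinv_mulVec {Pm : Matrix ι ι ℝ} (hP : P.PosSemidef) (hp1 : P * Pm * P = P)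
    (s : ι → ℝ) : qf Pm (P *ᵥ s) = qf P s := by
  rw [qf, qf, mulVec_mulVec, hP.mulVec_dotProduct_comm, mulVec_mulVec, ← Matrix.mul_assoc, hp1,
    dotProduct_comm]

theorem qf_le_qf_pinv_of_dotProduct_nonneg {Pm : Matrix ι ι ℝ} (hP : P.PosSemidef)
    (hp1 : P * Pm * P = P) {v w : ι → ℝ} (hw : w ∈ mrange P) (h : 0 ≤ (w - P *ᵥ v) ⬝ᵥ v) :
    qf P v ≤ qf Pm w := by
  obtain ⟨s, rfl⟩ := hw
  rw [sub_dotProduct] at h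
  have hqf : P *ᵥ v ⬝ᵥ v = qf P v := dotProduct_comm _ _
  rw [hP.qf_pinv_mulVec hp1]
  linarith [hP.two_mul_mulVec_dotProduct_le s v]

end Matrix.PosSemidef

theorem stmt17_general {d : ℕ} (P Pm : Matrix (Fin d) (Fin d) ℝ)
    (hP : P.PosSemidef)
    (hp1 : P * Pm * P = P)
    (F : (Fin d → ℝ) → Set (Fin d → ℝ))
    (hmono : ∀ z z' u v, u ∈ F z → v ∈ F z' → 0 ≤ (u - v) ⬝ᵥ (z - z'))
    (z : ℕ → Fin d → ℝ)
    (hstep : ∀ i, P.mulVec (z i - z (i+1)) ∈ F (z (i+1)))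
    (k : ℕ) (hne : (F (z k) ∩ mrange P).Nonempty)
    (hIDS : sInf (qf Pm '' (F (z k) ∩ mrange P)) = 0) :
    (0 : Fin d → ℝ) ∈ F (z (k+1)) := by
  have hlb : qf P (z k - z (k+1)) ≤ 0 := by
    rw [← hIDS]
    refine le_csInf (hne.image _) ?_
    rintro _ ⟨w, ⟨hwF, hwP⟩, rfl⟩
    exact hP.qf_le_qf_pinv_of_dotProduct_nonneg hp1 hwP (hmono _ _ _ _ hwF (hstep k))
  have hzero : P *ᵥ (z k - z (k+1)) = 0 :=
    (hP.qf_eq_zero_iff _).mp (le_antisymm hlb (hP.qf_nonneg _))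
  simpa [hzero] using hstep k

/-- If the generalized IDS `dist²_{P⁻}(0, F(z_k) ∩ range P)` vanishes at iterate `k`,
then `0 ∈ F(z_{k+1})`. Here `Pm` is the Moore–Penrose pseudo-inverse of the symmetric
positive semidefinite matrix `P`, characterized by the four Penrose identities. -/
theorem stmt17 {d : ℕ} (P Pm : Matrix (Fin d) (Fin d) ℝ)
    (hP : P.PosSemidef)
    (hp1 : P * Pm * P = P) (hp2 : Pm * P * Pm = Pm)
    (hp3 : (P * Pm)ᵀ = P * Pm) (hp4 : (Pm * P)ᵀ = Pm * P)
    (F : (Fin d → ℝ) → Set (Fin d → ℝ))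
    (hmono : ∀ z z' u v, u ∈ F z → v ∈ F z' → 0 ≤ (u - v) ⬝ᵥ (z - z'))
    (z : ℕ → Fin d → ℝ)
    (hstep : ∀ i, P.mulVec (z i - z (i+1)) ∈ F (z (i+1)))
    (k : ℕ) (hne : (F (z k) ∩ mrange P).Nonempty)
    (hIDS : sInf (qf Pm '' (F (z k) ∩ mrange P)) = 0) :
    (0 : Fin d → ℝ) ∈ F (z (k+1)) :=
  stmt17_general P Pm hP hp1 F hmono z hstep k hne hIDS
end
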